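/- Let Λ be a string algebra, let b be a prime band and let aB be a string where a, b are arrows (B the formal inverse of b). Then any cyclic permutation of the prime band contains the substring aB at most once. -/

import Mathlib

/-- A quiver with a set of monomial relations, presenting a string algebra. -/
structure SAQuiver where
  V : Type
  A : Type
  src : A → V
  tgt : A → V
  rel : Set (List A)

namespace SA

variable (S : SAQuiver)

/-- A syllable: a direct arrow (`Sum.inl`) or the formal inverse of an arrow (`Sum.inr`). -/
abbrev Syl := S.A ⊕ S.A

/-- A word of syllables, listed in order of traversal (the head is the first,
i.e. rightmost, syllable in the usual right-to-left notation `αₙ…α₁`). -/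
abbrev Word := List (Syl S)

def sylSrc : Syl S → S.V
  | Sum.inl a => S.src a
  | Sum.inr a => S.tgt a

def sylTgt : Syl S → S.V
  | Sum.inl a => S.tgt a
  | Sum.inr a => S.src a

def sylInv : Syl S → Syl S
  | Sum.inl a => Sum.inr a
  | Sum.inr a => Sum.inl a

/-- Consecutive syllables compose as a walk. -/
def IsWalk : Word S → Prop
  | [] => True
  | [_] => True
  | x :: y :: l => sylTgt S x = sylSrc S y ∧ IsWalk (y :: l)

/-- No two consecutive syllables are inverse to each other. -/
def Reduced : Word S → Prop
  | x :: y :: l => y ≠ sylInv S x ∧ Reduced (y :: l)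
  | _ => True

/-- No subword is a relation or the inverse of a relation. -/
def AvoidsRel (w : Word S) : Prop :=
  ∀ p ∈ S.rel, ¬ ((p.map (Sum.inl : S.A → Syl S)) <:+: w) ∧
    ¬ ((p.map (Sum.inr : S.A → Syl S)).reverse <:+: w)

/-- A (finite, nonempty) string. -/
def IsStr (w : Word S) : Prop :=
  w ≠ [] ∧ IsWalk S w ∧ Reduced S w ∧ AvoidsRel S w

def wSrc : Word S → Option S.V
  | [] => none
  | x :: _ => some (sylSrc S x)

def wTgt (w : Word S) : Option S.V := w.getLast?.map (sylTgt S)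

/-- A cyclic word: its target equals its source. -/
def Cyclic (w : Word S) : Prop := w ≠ [] ∧ wSrc S w = wTgt S w

/-- The `n`-th power of a word under concatenation. -/
def pow (w : Word S) (n : ℕ) : Word S := (List.replicate n w).flatten

/-- A word containing both a direct and an inverse syllable. -/
def Mixed (w : Word S) : Prop := (∃ a, Sum.inl a ∈ w) ∧ (∃ a, Sum.inr a ∈ w)

/-- A word that is not a proper power of a shorter word. -/
def Primitive (w : Word S) : Prop := ¬ ∃ (u : Word S) (k : ℕ), 2 ≤ k ∧ w = pow S u k

/-- A rotation (cyclic permutation) of a word. -/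
def IsRotation (u w : Word S) : Prop := ∃ l₁ l₂ : Word S, w = l₁ ++ l₂ ∧ u = l₂ ++ l₁

/-- A band: a primitive mixed cyclic string, all of whose powers are strings, whose first
syllable is inverse and whose last syllable is direct. -/
def IsBand (w : Word S) : Prop :=
  IsStr S w ∧ Cyclic S w ∧ Primitive S w ∧
    (∃ a, w.head? = some (Sum.inr a)) ∧ (∃ a, w.getLast? = some (Sum.inl a)) ∧
    ∀ n : ℕ, 1 ≤ n → IsStr S (pow S w n)

/-- A cyclic permutation of a band. -/
def RotOfBand (u : Word S) : Prop := ∃ b, IsBand S b ∧ IsRotation S u b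

/-- A prime band: no cyclic permutation of it is a concatenation of two or more cyclic
permutations of bands. -/
def IsPrimeBand (w : Word S) : Prop :=
  IsBand S w ∧
    ¬ ∃ (w' : Word S) (parts : List (Word S)), IsRotation S w' w ∧ 2 ≤ parts.length ∧
        w' = parts.flatten ∧ ∀ p ∈ parts, RotOfBand S p

/-- A word containing no cyclic permutation of a band as a subword. -/
def BandFree (w : Word S) : Prop := ¬ ∃ u, RotOfBand S u ∧ u <:+: w

/-- A word all of whose syllables are direct. -/
def DirectWord (w : Word S) : Prop := ∀ x ∈ w, ∃ a, x = Sum.inl a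

/-- A word all of whose syllables are inverse. -/
def InverseWord (w : Word S) : Prop := ∀ x ∈ w, ∃ a, x = Sum.inr a

/-- A string which is a substring of a cyclic permutation of a band. -/
def Extendable (w : Word S) : Prop := ∃ u, RotOfBand S u ∧ w <:+: u

/-- The axioms for `(Q, ρ)` to present a string algebra. -/
def IsStringAlgebra : Prop :=
  Finite S.V ∧ Finite S.A ∧
  (∀ p ∈ S.rel, p ≠ [] ∧ IsWalk S (p.map (Sum.inl : S.A → Syl S))) ∧
  {p : List S.A | p ≠ [] ∧ IsWalk S (p.map (Sum.inl : S.A → Syl S)) ∧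
      ∀ q ∈ S.rel, ¬ (q <:+: p)}.Finite ∧
  (∀ v : S.V, ¬ ∃ a b c : S.A, a ≠ b ∧ b ≠ c ∧ a ≠ c ∧
      S.src a = v ∧ S.src b = v ∧ S.src c = v) ∧
  (∀ v : S.V, ¬ ∃ a b c : S.A, a ≠ b ∧ b ≠ c ∧ a ≠ c ∧
      S.tgt a = v ∧ S.tgt b = v ∧ S.tgt c = v) ∧
  (∀ b c₁ c₂ : S.A, c₁ ≠ c₂ → IsStr S [Sum.inl b, Sum.inl c₁] →
      ¬ IsStr S [Sum.inl b, Sum.inl c₂]) ∧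
  (∀ b a₁ a₂ : S.A, a₁ ≠ a₂ → IsStr S [Sum.inl a₁, Sum.inl b] →
      ¬ IsStr S [Sum.inl a₂, Sum.inl b])

end SA

namespace SA

variable (S : SAQuiver)

/-! ### Sign functions and hammocks -/

/-- `σ` of a syllable: `σ(a) = σ a`, `σ(B) = ε b`. -/
def sylSg (σ ε : S.A → ℤ) : Syl S → ℤ
  | Sum.inl a => σ a
  | Sum.inr a => ε a

/-- `ε` of a syllable: `ε(a) = ε a`, `ε(B) = σ b`. -/
def sylEp (σ ε : S.A → ℤ) : Syl S → ℤ
  | Sum.inl a => ε a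
  | Sum.inr a => σ a

/-- The conditions on the chosen sign maps `σ, ε : Q₁ → {±1}`. -/
def SignOK (σ ε : S.A → ℤ) : Prop :=
  (∀ a, σ a = 1 ∨ σ a = -1) ∧ (∀ a, ε a = 1 ∨ ε a = -1) ∧
  (∀ a b, a ≠ b → S.src a = S.src b → σ a = -σ b) ∧
  (∀ a b, a ≠ b → S.tgt a = S.tgt b → ε a = -ε b) ∧
  (∀ c b : S.A, IsStr S [Sum.inl c, Sum.inl b] → σ b = -ε c)

/-- Membership in the hammock `H_r(v)`: strings ending at `v` with `ε`-value `1`;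
the empty word stands for the lazy string `1_{(v,1)}`. -/
def HrMem (σ ε : S.A → ℤ) (v : S.V) (w : Word S) : Prop :=
  w = [] ∨ (IsStr S w ∧ wTgt S w = some v ∧
    ∃ s, w.getLast? = some s ∧ sylEp S σ ε s = 1)

/-- The order `<_r` on `H_r(v)`:  `u <_r v` iff `v = u a x`, or `u = v B y`, or
`v = z a x ∧ u = z B y`. -/
def ltr (u v : Word S) : Prop :=
  (∃ (a : S.A) (x : Word S), v = x ++ [Sum.inl a] ++ u) ∨
  (∃ (b : S.A) (y : Word S), u = y ++ [Sum.inr b] ++ v) ∨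
  (∃ (a b : S.A) (x y z : Word S),
      v = x ++ [Sum.inl a] ++ z ∧ u = y ++ [Sum.inr b] ++ z)

/-- The inverse of a word. -/
def wInv (w : Word S) : Word S := (w.map (sylInv S)).reverse

/-- Membership in the hammock `H_l(v)`: strings starting at `v` with `σ`-value `-1`;
the empty word stands for the lazy string `1_{(v,-1)}`'s role in `H_l(v)`. -/
def HlMem (σ ε : S.A → ℤ) (v : S.V) (w : Word S) : Prop :=
  w = [] ∨ (IsStr S w ∧ wSrc S w = some v ∧
    ∃ s, w.head? = some s ∧ sylSg S σ ε s = -1)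

/-- The order `<_l` on `H_l(v)`: `u <_l v` iff `v⁻¹ <_r u⁻¹`. -/
def ltl (u v : Word S) : Prop := ltr S (wInv S v) (wInv S u)

/-- `v` is the direct successor of `u` in the total order `lt` restricted to `P`. -/
def DirSucc (P : Word S → Prop) (lt : Word S → Word S → Prop) (u v : Word S) : Prop :=
  P u ∧ P v ∧ lt u v ∧ ¬ ∃ w, P w ∧ lt u w ∧ lt w v

/-- A finite interval (chain of consecutive elements) in a hammock whose length sequence is
monotone. -/
def MonoChain (P : Word S → Prop) (lt : Word S → Word S → Prop) (n : ℕ)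
    (c : ℕ → Word S) : Prop :=
  (∀ i < n, DirSucc S P lt (c i) (c (i + 1))) ∧
  ((∀ i < n, (c i).length < (c (i + 1)).length) ∨
   (∀ i < n, (c (i + 1)).length < (c i).length))

/-- Torsion-freeness for one hammock: every finite interval with monotone length sequence
extends (on one of its two ends) to a strictly larger such interval. -/
def TFfor (P : Word S → Prop) (lt : Word S → Word S → Prop) : Prop :=
  ∀ (n : ℕ) (c : ℕ → Word S), MonoChain S P lt n c →
    ∃ c' : ℕ → Word S, MonoChain S P lt (n + 1) c' ∧
      ((∀ i ≤ n, c' i = c i) ∨ (∀ i ≤ n, c' (i + 1) = c i))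

/-- A torsion-free string algebra: both the left and right hammock conditions hold at
every vertex. -/
def TorsionFree (σ ε : S.A → ℤ) : Prop :=
  (∀ v : S.V, TFfor S (HrMem S σ ε v) (ltr S)) ∧
  (∀ v : S.V, TFfor S (HlMem S σ ε v) (ltl S))

/-! ### Bridges and the bridge quiver -/

/-- A weak bridge `b₁ → b₂`: a band-free string `u` (possibly of length zero) such that
`b₂ u b₁` is a string. -/
def IsWeakBridge (b₁ u b₂ : Word S) : Prop :=
  IsPrimeBand S b₁ ∧ IsPrimeBand S b₂ ∧ BandFree S u ∧ IsStr S (b₁ ++ u ++ b₂)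

/-- A bridge: a weak bridge which does not factor through another prime band. -/
def IsBridge (b₁ u b₂ : Word S) : Prop :=
  IsWeakBridge S b₁ u b₂ ∧
  ¬ ∃ (bb u₁ u₂ : Word S), IsPrimeBand S bb ∧ IsWeakBridge S b₁ u₁ bb ∧
      IsWeakBridge S bb u₂ b₂ ∧
      ((u = u₁ ++ u₂ ∧ u₁ ≠ [] ∧ u₂ ≠ []) ∨
       (∃ u₁' u₂' u₁'' u₂'' : Word S, u = u₁' ++ u₂' ∧ u₁' ≠ [] ∧ u₂' ≠ [] ∧
          u₁ = u₁' ++ u₁'' ∧ u₂ = u₂'' ++ u₂' ∧ bb = u₁'' ++ u₂''))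

/-- `R` is a set of representatives of the prime bands up to cyclic permutation. -/
def RepSet (R : Set (Word S)) : Prop :=
  (∀ r ∈ R, IsPrimeBand S r) ∧
  ∀ b, IsPrimeBand S b → ∃! r, r ∈ R ∧ IsRotation S b r

/-- One arrow of the bridge quiver with vertex set `R`. -/
def Step (R : Set (Word S)) (x y : Word S) : Prop :=
  x ∈ R ∧ y ∈ R ∧ ∃ u, IsBridge S x u y

/-- Reachability by a directed path in the bridge quiver. -/
def Reach (R : Set (Word S)) : Word S → Word S → Prop :=
  Relation.ReflTransGen (Step S R)

/-- Adjacency (in either direction) in the bridge quiver. -/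
def Adj (R : Set (Word S)) (x y : Word S) : Prop := Step S R x y ∨ Step S R y x

/-- Lying in the same connected component of the bridge quiver. -/
def SameComp (R : Set (Word S)) : Word S → Word S → Prop :=
  Relation.ReflTransGen (Adj S R)

/-- `x` lies on a meta-band, i.e. on a directed cycle of positive length in the bridge
quiver. -/
def OnMetaBand (R : Set (Word S)) (x : Word S) : Prop :=
  (∃ u, IsBridge S x u x ∧ u ≠ []) ∨
  (∃ y, y ≠ x ∧ y ∈ R ∧ Reach S R x y ∧ Reach S R y x)

/-- A meta-`⋃`-cyclic string algebra: each connected component of the bridge quiver has at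
least two vertices and is a union of meta-bands (every vertex and every arrow lies on a
directed cycle of positive length). -/
def MetaUCyclic (R : Set (Word S)) : Prop :=
  (∀ x ∈ R, ∃ y ∈ R, y ≠ x ∧ SameComp S R x y) ∧
  (∀ x ∈ R, OnMetaBand S R x) ∧
  (∀ x y u, x ∈ R → y ∈ R → IsBridge S x u y → Reach S R y x)

/-- A meta-torsion-free string algebra: each connected component of the bridge quiver has
at least two vertices, and every finite directed path of positive length extends to a
`ℤ`-indexed directed path. -/
def MetaTorsionFree (R : Set (Word S)) : Prop :=
  (∀ x ∈ R, ∃ y ∈ R, y ≠ x ∧ SameComp S R x y) ∧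
  (∀ (n : ℕ) (c e : ℕ → Word S), 0 < n → (∀ i ≤ n, c i ∈ R) →
    (∀ i < n, IsBridge S (c i) (e i) (c (i + 1))) →
    ∃ (g d : ℤ → Word S), (∀ i : ℤ, g i ∈ R) ∧
      (∀ i : ℤ, IsBridge S (g i) (d i) (g (i + 1))) ∧
      (∀ i : ℕ, i ≤ n → g (i : ℤ) = c i) ∧ (∀ i : ℕ, i < n → d (i : ℤ) = e i))

/-- A non-domestic string algebra: one with infinitely many bands. -/
def NonDomestic : Prop := ¬ {b : Word S | IsBand S b}.Finite

end SA

/-!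
Rotate `w` to `s₁ s₂` with `sᵢ = B a uᵢ`; then `sᵢ B` is a substring of the string `(s₁ s₂)²`.
This makes every power of `sᵢ` a string: walks and reducedness only see the junction `sᵢ B`, and a
relation, being a word of direct (or inverse) letters only, cannot cross the junction `B | a` of
two copies of `sᵢ`. Hence the primitive root `tᵢ` of `sᵢ` is a cyclic permutation of a band
(rotate it to end at its last direct letter), and `s₁ s₂ = t₁^k₁ t₂^k₂` contradicts primality.
-/

theorem List.IsChain.flatten_replicate {α : Type*} {R : α → α → Prop} {l : List α} {x : α}
    (h : (l ++ [x]).IsChain R) (hx : l.head? = some x) (n : ℕ) :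
    (List.replicate n l).flatten.IsChain R := by
  have hl : l ≠ [] := by rintro rfl; simp at hx
  obtain ⟨hchain, -, hlast⟩ := List.isChain_append.mp h
  rw [List.isChain_flatten (by simp [hl.symm])]
  refine ⟨fun l' hl' => List.eq_of_mem_replicate hl' ▸ hchain,
    List.isChain_replicate_of_rel _ fun y hy z hz => ?_⟩
  rw [hx, Option.mem_some_iff] at hz
  exact hz ▸ hlast y hy x rfl

namespace SA

open Sum

variable {S : SAQuiver}

theorem isWalk_iff_isChain :
    ∀ {w : Word S}, IsWalk S w ↔ w.IsChain (fun x y => sylTgt S x = sylSrc S y)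
  | [] | [_] => by simp [IsWalk]
  | _ :: _ :: _ => by simp [IsWalk, isWalk_iff_isChain]

theorem reduced_iff_isChain :
    ∀ {w : Word S}, Reduced S w ↔ w.IsChain (fun x y => y ≠ sylInv S x)
  | [] | [_] => by simp [Reduced]
  | _ :: _ :: _ => by simp [Reduced, reduced_iff_isChain]

theorem AvoidsRel.of_infix {w t : Word S} (hw : AvoidsRel S w) (ht : t <:+: w) :
    AvoidsRel S t :=
  fun p hp => ⟨fun h => (hw p hp).1 (h.trans ht), fun h => (hw p hp).2 (h.trans ht)⟩

theorem IsStr.of_infix {w t : Word S} (hw : IsStr S w) (ht : t <:+: w) (hne : t ≠ []) :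
    IsStr S t :=
  ⟨hne, isWalk_iff_isChain.mpr ((isWalk_iff_isChain.mp hw.2.1).infix ht),
    reduced_iff_isChain.mpr ((reduced_iff_isChain.mp hw.2.2.1).infix ht), hw.2.2.2.of_infix ht⟩

section Pow

@[simp] theorem pow_zero (w : Word S) : pow S w 0 = [] := rfl

theorem pow_succ (w : Word S) (n : ℕ) : pow S w (n + 1) = w ++ pow S w n := by
  simp [pow, List.replicate_succ]

@[simp] theorem pow_one (w : Word S) : pow S w 1 = w := by simp [pow]

theorem pow_two (w : Word S) : pow S w 2 = w ++ w := by simp [pow_succ]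

theorem pow_add (w : Word S) (m n : ℕ) : pow S w (m + n) = pow S w m ++ pow S w n := by
  simp only [pow, List.replicate_add, List.flatten_append]

theorem pow_mul (w : Word S) (m n : ℕ) : pow S (pow S w m) n = pow S w (n * m) := by
  induction n with
  | zero => simp
  | succ n ih => rw [pow_succ, ih, Nat.succ_mul, Nat.add_comm, pow_add]

theorem length_pow (w : Word S) (n : ℕ) : (pow S w n).length = n * w.length := by
  simp [pow]

theorem pow_ne_nil {w : Word S} (hw : w ≠ []) {n : ℕ} (hn : n ≠ 0) : pow S w n ≠ [] := by
  simp [pow, hw, hn]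

theorem head?_pow (w : Word S) {n : ℕ} (hn : n ≠ 0) : (pow S w n).head? = w.head? :=
  List.head?_flatten_replicate hn w

theorem mem_of_mem_pow {w : Word S} {x : Syl S} {n : ℕ} (h : x ∈ pow S w n) : x ∈ w := by
  simp only [pow, List.mem_flatten, List.mem_replicate] at h
  obtain ⟨l, ⟨-, rfl⟩, hx⟩ := h
  exact hx

theorem pow_prefix_pow (w : Word S) {m n : ℕ} (h : m ≤ n) : pow S w m <+: pow S w n := by
  obtain ⟨k, rfl⟩ := Nat.exists_eq_add_of_le h
  rw [pow_add]
  exact List.prefix_append _ _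

theorem pow_append_succ (l₁ l₂ : Word S) (n : ℕ) :
    pow S (l₁ ++ l₂) (n + 1) = l₁ ++ pow S (l₂ ++ l₁) n ++ l₂ := by
  induction n with
  | zero => simp
  | succ n ih => rw [pow_succ, ih, pow_succ (l₂ ++ l₁)]; simp

end Pow

section Rotation

theorem isRotation_iff_isRotated {u v : Word S} : IsRotation S u v ↔ v ~r u := by
  constructor
  · rintro ⟨l₁, l₂, rfl, rfl⟩
    exact List.isRotated_append
  · intro h
    obtain ⟨n, hn, rfl⟩ := List.isRotated_iff_mod.mp h
    exact ⟨v.take n, v.drop n, (List.take_append_drop n v).symm,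
      List.rotate_eq_drop_append_take hn⟩

theorem IsRotation.trans {u v w : Word S} (h₁ : IsRotation S u v) (h₂ : IsRotation S v w) :
    IsRotation S u w :=
  isRotation_iff_isRotated.mpr
    ((isRotation_iff_isRotated.mp h₂).trans (isRotation_iff_isRotated.mp h₁))

theorem IsRotation.isStr_pow {u v : Word S} (h : IsRotation S u v)
    (hv : ∀ n, 1 ≤ n → IsStr S (pow S v n)) (n : ℕ) (hn : 1 ≤ n) : IsStr S (pow S u n) := by
  obtain ⟨l₁, l₂, rfl, rfl⟩ := h
  have hne : l₂ ++ l₁ ≠ [] := by simpa [and_comm] using (hv 1 le_rfl).1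
  exact (hv (n + 1) (by omega)).of_infix ⟨l₁, l₂, (pow_append_succ l₁ l₂ n).symm⟩
    (pow_ne_nil hne (by omega))

theorem exists_pow_eq_of_append_eq_pow {l₁ : Word S} :
    ∀ {l₂ u : Word S} {k : ℕ}, k ≠ 0 → l₁ ++ l₂ = pow S u k → ∃ v, l₂ ++ l₁ = pow S v k := by
  induction l₁ with
  | nil => exact fun _ h => ⟨_, by simpa using h⟩
  | cons c l₁ ih =>
    intro l₂ u k hk h
    obtain ⟨k, rfl⟩ := Nat.exists_eq_succ_of_ne_zero hk
    cases u with
    | nil => simp [pow] at h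
    | cons c' u =>
      rw [pow_succ, List.cons_append, List.cons_append, List.cons.injEq] at h
      obtain ⟨rfl, h⟩ := h
      -- `(c u)^(k+1)` rotated by one letter is `(u c)^(k+1)`
      have h' : l₁ ++ (l₂ ++ [c]) = pow S (u ++ [c]) (k + 1) := by
        rw [pow_append_succ, ← List.append_assoc, h]; simp
      obtain ⟨v, hv⟩ := ih (Nat.succ_ne_zero k) h'
      exact ⟨v, by simpa using hv⟩

theorem Primitive.of_isRotation {u v : Word S} (hv : Primitive S v) (h : IsRotation S u v) :
    Primitive S u := by
  rintro ⟨t, k, hk, rfl⟩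
  obtain ⟨l₁, l₂, rfl, hu⟩ := h
  obtain ⟨t', ht'⟩ := exists_pow_eq_of_append_eq_pow (by omega) hu.symm
  exact hv ⟨t', k, hk, ht'⟩

end Rotation

theorem exists_primitive_root (s : Word S) (hs : s ≠ []) :
    ∃ t k, s = pow S t k ∧ Primitive S t := by
  by_cases hp : Primitive S s
  · exact ⟨s, 1, (pow_one s).symm, hp⟩
  obtain ⟨u, k, hk, rfl⟩ := not_not.mp hp
  have hu : u ≠ [] := by rintro rfl; simp [pow] at hs
  obtain ⟨t, m, rfl, ht⟩ := exists_primitive_root u hu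
  exact ⟨t, k * m, by rw [pow_mul], ht⟩
termination_by s.length
decreasing_by
  subst_vars
  have : 0 < u.length := List.length_pos_iff.mpr hu
  rw [length_pow]
  nlinarith

theorem isBand_of_forall_isStr_pow {w : Word S} (hhead : ∃ b, w.head? = some (inr b))
    (hlast : ∃ a, w.getLast? = some (inl a)) (hprim : Primitive S w)
    (hpow : ∀ n, 1 ≤ n → IsStr S (pow S w n)) : IsBand S w := by
  have hw : IsStr S w := by simpa using hpow 1 le_rfl
  refine ⟨hw, ⟨hw.1, ?_⟩, hprim, hhead, hlast, hpow⟩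
  obtain ⟨b, hb⟩ := hhead
  obtain ⟨a, ha⟩ := hlast
  have hwalk := isWalk_iff_isChain.mp (hpow 2 (by norm_num)).2.1
  rw [pow_two, List.isChain_append] at hwalk
  obtain ⟨w', rfl⟩ := List.head?_eq_some_iff.mp hb
  simp [wSrc, wTgt, ha, hwalk.2.2 _ ha _ hb]

theorem exists_eq_append_inl_inverseWord {t : Word S} (ht : ∃ a, inl a ∈ t) :
    ∃ l₁ c l₂, t = l₁ ++ inl c :: l₂ ∧ InverseWord S l₂ := by
  induction t using List.reverseRecOn with
  | nil => simp at ht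
  | append_singleton t x ih =>
    cases x with
    | inl c => exact ⟨t, c, [], rfl, by simp [InverseWord]⟩
    | inr d =>
      obtain ⟨l₁, c, l₂, rfl, hl₂⟩ := ih (by simpa using ht)
      refine ⟨l₁, c, l₂ ++ [inr d], by simp, ?_⟩
      simpa [InverseWord] using hl₂

theorem rotOfBand_of_primitive {t : Word S} {b a : S.A} (hhead : t.head? = some (inr b))
    (ha : inl a ∈ t) (hprim : Primitive S t) (hpow : ∀ n, 1 ≤ n → IsStr S (pow S t n)) :
    RotOfBand S t := by
  obtain ⟨l₁, c, l₂, rfl, hl₂⟩ := exists_eq_append_inl_inverseWord ⟨a, ha⟩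
  have hrot : IsRotation S (l₂ ++ (l₁ ++ [inl c])) (l₁ ++ inl c :: l₂) :=
    ⟨l₁ ++ [inl c], l₂, by simp, rfl⟩
  refine ⟨l₂ ++ (l₁ ++ [inl c]),
    isBand_of_forall_isStr_pow ?_ ⟨c, by simp⟩ (hprim.of_isRotation hrot) (hrot.isStr_pow hpow),
    ⟨l₂, l₁ ++ [inl c], rfl, by simp⟩⟩
  cases l₂ with
  | nil => exact ⟨b, by simpa using hhead⟩
  | cons x l₂ =>
    obtain ⟨d, rfl⟩ := hl₂ x List.mem_cons_self
    exact ⟨d, rfl⟩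

theorem infix_or_infix_of_infix_append {t xs ys : Word S} {b a : S.A}
    (ht : DirectWord S t ∨ InverseWord S t) (h : t <:+: (xs ++ [inr b]) ++ (inl a :: ys)) :
    t <:+: xs ++ [inr b] ∨ t <:+: inl a :: ys := by
  rcases List.infix_append_iff_ne_nil.mp h with h | h | ⟨l₁, l₂, h₁, h₂, rfl, hs, hp⟩
  · exact Or.inl h
  · exact Or.inr h
  have hb : inr b ∈ l₁ ++ l₂ := List.mem_append_left _ (by
    simpa [hs.getLast h₁] using List.getLast_mem h₁)
  have ha : inl a ∈ l₁ ++ l₂ := List.mem_append_right _ (by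
    simpa [hp.head h₂] using List.head_mem h₂)
  rcases ht with ht | ht
  · simpa using ht _ hb
  · simpa using ht _ ha

theorem infix_append_of_infix_pow {b a : S.A} {u t : Word S}
    (ht : DirectWord S t ∨ InverseWord S t) :
    ∀ {n}, t <:+: pow S (inr b :: inl a :: u) n → t <:+: inr b :: inl a :: u ++ [inr b]
  | 0, h => by simp_all
  | 1, h => (pow_one _ ▸ h).trans (List.prefix_append _ _).isInfix
  | n + 2, h => by
    have hsplit : pow S (inr b :: inl a :: u) (n + 2) =
        (inr b :: inl a :: u ++ [inr b]) ++ (inl a :: (u ++ pow S (inr b :: inl a :: u) n)) := by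
      simp [pow_succ]
    rcases infix_or_infix_of_infix_append ht (hsplit ▸ h) with h | h
    · exact h
    · exact infix_append_of_infix_pow ht (n := n + 1) (h.trans ⟨[inr b], [], by simp [pow_succ]⟩)

theorem isStr_pow_of_isStr_append {b a : S.A} {u : Word S}
    (h : IsStr S (inr b :: inl a :: u ++ [inr b])) (n : ℕ) (hn : 1 ≤ n) :
    IsStr S (pow S (inr b :: inl a :: u) n) := by
  obtain ⟨-, hwalk, hred, hrel⟩ := h
  refine ⟨pow_ne_nil (List.cons_ne_nil _ _) (by omega),
    isWalk_iff_isChain.mpr ((isWalk_iff_isChain.mp hwalk).flatten_replicate rfl n),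
    reduced_iff_isChain.mpr ((reduced_iff_isChain.mp hred).flatten_replicate rfl n),
    fun p hp => ⟨fun hc => (hrel p hp).1 (infix_append_of_infix_pow (Or.inl ?_) hc),
      fun hc => (hrel p hp).2 (infix_append_of_infix_pow (Or.inr ?_) hc)⟩⟩
  · simp [DirectWord]
  · simp [InverseWord]

theorem exists_rotOfBand_pow_eq {b a : S.A} {u : Word S}
    (h : IsStr S (inr b :: inl a :: u ++ [inr b])) :
    ∃ t k, k ≠ 0 ∧ inr b :: inl a :: u = pow S t k ∧ RotOfBand S t := by
  obtain ⟨t, k, hs, hprim⟩ := exists_primitive_root (inr b :: inl a :: u) (List.cons_ne_nil _ _)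
  have hk : k ≠ 0 := by rintro rfl; simp at hs
  have hhead : t.head? = some (inr b) := by rw [← head?_pow t hk, ← hs]; rfl
  have ht : t ≠ [] := by rintro rfl; simp at hhead
  refine ⟨t, k, hk, hs, rotOfBand_of_primitive hhead (a := a) (mem_of_mem_pow (n := k) (by rw [← hs]; simp))
    hprim fun n hn => (isStr_pow_of_isStr_append h n hn).of_infix ?_ (pow_ne_nil ht (by omega))⟩
  rw [hs, pow_mul]
  exact (pow_prefix_pow t (Nat.le_mul_of_pos_right n (Nat.pos_of_ne_zero hk))).isInfix

end SA

open SA in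
theorem prime_band_contains_aB_at_most_once_general (S : SAQuiver)
    (pb : Word S) (hpb : IsPrimeBand S pb) (a b : S.A) :
    ∀ w : Word S, IsRotation S w pb →
      ¬ ∃ x y z : Word S,
          w = x ++ [Sum.inr b, Sum.inl a] ++ y ++ [Sum.inr b, Sum.inl a] ++ z := by
  rintro w hw ⟨x, y, z, rfl⟩
  obtain ⟨⟨-, -, -, -, -, hpow⟩, hprime⟩ := hpb
  set s₁ : Word S := Sum.inr b :: Sum.inl a :: y
  set s₂ : Word S := Sum.inr b :: Sum.inl a :: (z ++ x)
  have hrot : IsRotation S (s₁ ++ s₂) pb := IsRotation.trans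
    ⟨x, [Sum.inr b, Sum.inl a] ++ y ++ [Sum.inr b, Sum.inl a] ++ z, by simp, by simp [s₁, s₂]⟩ hw
  have hW : IsStr S (pow S (s₁ ++ s₂) 2) := hrot.isStr_pow hpow 2 (by norm_num)
  have h₁ : IsStr S (s₁ ++ [Sum.inr b]) :=
    hW.of_infix ⟨[], Sum.inl a :: (z ++ x) ++ s₁ ++ s₂, by simp [s₁, s₂, SA.pow_two]⟩ (by simp)
  have h₂ : IsStr S (s₂ ++ [Sum.inr b]) :=
    hW.of_infix ⟨s₁, Sum.inl a :: y ++ s₂, by simp [s₁, s₂, SA.pow_two]⟩ (by simp)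
  obtain ⟨t₁, k₁, hk₁, hs₁, ht₁⟩ := exists_rotOfBand_pow_eq h₁
  obtain ⟨t₂, k₂, hk₂, hs₂, ht₂⟩ := exists_rotOfBand_pow_eq h₂
  refine hprime ⟨s₁ ++ s₂, List.replicate k₁ t₁ ++ List.replicate k₂ t₂, hrot, by simp only [List.length_append, List.length_replicate]; omega,
    by rw [List.flatten_append]; exact congrArg₂ (· ++ ·) hs₁ hs₂, ?_⟩
  simp only [List.mem_append, List.mem_replicate]
  rintro p (⟨-, rfl⟩ | ⟨-, rfl⟩) <;> assumption

open SA in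
/-- If `pb` is a prime band and `aB` is a string (for arrows `a`, `b`), then no cyclic
permutation of `pb` contains the substring `aB` more than once. -/
theorem prime_band_contains_aB_at_most_once (S : SAQuiver) (hSA : SA.IsStringAlgebra S)
    (pb : Word S) (hpb : IsPrimeBand S pb) (a b : S.A)
    (hab : IsStr S [Sum.inr b, Sum.inl a]) :
    ∀ w : Word S, IsRotation S w pb →
      ¬ ∃ x y z : Word S,
          w = x ++ [Sum.inr b, Sum.inl a] ++ y ++ [Sum.inr b, Sum.inl a] ++ z :=
  prime_band_contains_aB_at_most_once_general S pb hpb a b
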